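/- For integers m, n ≥ 1, let μ_m = (1/m)∑_{i=1}^m δ_{(i,0)} on ℝ² and ν_{m,n} = μ_m P_{π/(2n)}, where P_θ(x) = ½(δ_{x+(cos θ, sin θ)} + δ_{x−(cos θ, sin θ)}). Then the martingale coupling π_{m,n} = μ_m(Id, P_{π/(2n)}) is the unique martingale coupling between μ_m and ν_{m,n}. -/

import Mathlib

open MeasureTheory Filter
open scoped BoundedContinuousFunction ENNReal Topology

noncomputable section

/-- The plane with the Euclidean norm. -/
abbrev R2 : Type := EuclideanSpace ℝ (Fin 2)

/-- The point `(a, b)` of the Euclidean plane. -/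
def pt (a b : ℝ) : R2 := (WithLp.equiv 2 (Fin 2 → ℝ)).symm ![a, b]

/-- The unit vector at angle `θ`. -/
def dir (θ : ℝ) : R2 := pt (Real.cos θ) (Real.sin θ)

/-- The one-step kernel `P_θ` of the simple random walk along the line of angle `θ`. -/
def Pker (θ : ℝ) (x : R2) : Measure R2 :=
  (2 : ℝ≥0∞)⁻¹ • (Measure.dirac (x + dir θ) + Measure.dirac (x - dir θ))

/-- The measure `μ_m = (1/m) ∑_{i=1}^m δ_{(i,0)}`. -/
def muM (m : ℕ) : Measure R2 :=
  (m : ℝ≥0∞)⁻¹ • ∑ i ∈ Finset.Icc 1 m, Measure.dirac (pt i 0)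

/-- The coupling `μ(Id, P)` of `μ` with conditional law `P(x,·)` given `x`. -/
def couple (μ : Measure R2) (P : R2 → Measure R2) : Measure (R2 × R2) :=
  μ.bind (fun x => (P x).map (fun y => (x, y)))

/-- `π` is a coupling of `μ` and `ν`. -/
def IsCoupling {E F : Type*} [MeasurableSpace E] [MeasurableSpace F]
    (μ : Measure E) (ν : Measure F) (π : Measure (E × F)) : Prop :=
  IsProbabilityMeasure π ∧ π.map Prod.fst = μ ∧ π.map Prod.snd = ν

/-- `π` is a martingale coupling of `μ` and `ν`: a coupling such that
`∫ φ(x)(y - x) dπ(x,y) = 0` for every bounded continuous `φ`. -/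
def IsMartCoupling {E : Type*} [MeasurableSpace E] [NormedAddCommGroup E] [NormedSpace ℝ E]
    (μ ν : Measure E) (π : Measure (E × E)) : Prop :=
  IsCoupling μ ν π ∧ ∀ φ : E →ᵇ ℝ, ∫ p, φ p.1 • (p.2 - p.1) ∂π = 0

/-- The 1-Wasserstein distance: infimum of `∫ ‖x - y‖ dπ` over couplings. -/
def W1 {E : Type*} [MeasurableSpace E] [NormedAddCommGroup E] (μ ν : Measure E) : ℝ :=
  sInf {r | ∃ π : Measure (E × E), IsCoupling μ ν π ∧ ∫ p, ‖p.1 - p.2‖ ∂π = r}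

/-- The value `V^M_c(μ,ν)` of the martingale optimal transport problem. -/
def MOTval {E : Type*} [MeasurableSpace E] [NormedAddCommGroup E] [NormedSpace ℝ E]
    (c : E → E → ℝ) (μ ν : Measure E) : ℝ :=
  sInf {r | ∃ π : Measure (E × E), IsMartCoupling μ ν π ∧ ∫ p, c p.1 p.2 ∂π = r}

/-- Convex order: `∫ φ dμ ≤ ∫ φ dν` for every integrable convex `φ`. -/
def ConvexOrder {E : Type*} [MeasurableSpace E] [NormedAddCommGroup E] [NormedSpace ℝ E]
    (μ ν : Measure E) : Prop :=
  ∀ φ : E → ℝ, ConvexOn ℝ Set.univ φ → Integrable φ ν → Integrable φ μ →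
    ∫ x, φ x ∂μ ≤ ∫ x, φ x ∂ν


/-! ### Auxiliary material -/

local instance : DecidableEq R2 := Classical.decEq _

@[simp] lemma pt_app0 (a b : ℝ) : pt a b 0 = a := rfl
@[simp] lemma pt_app1 (a b : ℝ) : pt a b 1 = b := rfl
lemma pt_add (a b c d : ℝ) : pt a b + pt c d = pt (a+c) (b+d) := by
  ext i; fin_cases i <;> simp [pt]
lemma pt_sub (a b c d : ℝ) : pt a b - pt c d = pt (a-c) (b-d) := by
  ext i; fin_cases i <;> simp [pt]
lemma norm_pt0 (t : ℝ) : ‖pt t 0‖ = |t| := by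
  rw [EuclideanSpace.norm_eq]; simp [pt, Real.sqrt_sq_eq_abs]

def aPt (i : ℕ) : R2 := pt i 0
def tpPt (θ : ℝ) (i : ℕ) : R2 := pt (i + Real.cos θ) (Real.sin θ)
def tmPt (θ : ℝ) (i : ℕ) : R2 := pt (i - Real.cos θ) (-Real.sin θ)

lemma aPt_add_dir (θ : ℝ) (i : ℕ) : aPt i + dir θ = tpPt θ i := by
  rw [aPt, dir, pt_add, zero_add, tpPt]
lemma aPt_sub_dir (θ : ℝ) (i : ℕ) : aPt i - dir θ = tmPt θ i := by
  rw [aPt, dir, pt_sub, zero_sub, tmPt]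
lemma aPt_inj : Function.Injective aPt := fun i j h =>
  Nat.cast_injective (congrArg (fun v : R2 => v 0) h)
lemma tpPt_inj (θ : ℝ) : Function.Injective (tpPt θ) := fun i j h => by
  have h2 : (i : ℝ) + Real.cos θ = j + Real.cos θ := congrArg (fun v : R2 => v 0) h
  have h3 : (i : ℝ) = j := by linarith
  exact_mod_cast h3
lemma tmPt_inj (θ : ℝ) : Function.Injective (tmPt θ) := fun i j h => by
  have h2 : (i : ℝ) - Real.cos θ = j - Real.cos θ := congrArg (fun v : R2 => v 0) h
  have h3 : (i : ℝ) = j := by linarith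
  exact_mod_cast h3
lemma tpPt_ne_tmPt {θ : ℝ} (hsin : 0 < Real.sin θ) (i j : ℕ) : tpPt θ i ≠ tmPt θ j := by
  intro h
  have : Real.sin θ = -Real.sin θ := congrArg (fun v : R2 => v 1) h
  linarith
lemma one_le_norm_aPt_sub {k i : ℕ} (h : k ≠ i) : 1 ≤ ‖aPt k - aPt i‖ := by
  rw [aPt, aPt, pt_sub, sub_zero, norm_pt0]
  have h1 : ((k:ℤ) - i) ≠ 0 := sub_ne_zero.2 (by exact_mod_cast h)
  have h2 : (1:ℤ) ≤ |(k:ℤ) - i| := Int.one_le_abs h1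
  calc (1:ℝ) = ((1:ℤ):ℝ) := by norm_num
  _ ≤ ((|(k:ℤ) - i| : ℤ) : ℝ) := by exact_mod_cast h2
  _ = |(k:ℝ) - i| := by push_cast; ring_nf

/-- A continuous bump: `1` at `c`, vanishing outside the unit ball around `c`. -/
def bump (c : R2) : R2 →ᵇ ℝ :=
  BoundedContinuousFunction.mkOfBound
    ⟨fun x => max (1 - ‖x - c‖) 0,
      (continuous_const.sub (continuous_id.sub continuous_const).norm).max continuous_const⟩
    1 (by
      intro x y
      rw [Real.dist_eq]
      have hx0 : (0:ℝ) ≤ max (1 - ‖x - c‖) 0 := le_max_right _ _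
      have hx1 : max (1 - ‖x - c‖) 0 ≤ 1 := max_le (by linarith [norm_nonneg (x - c)]) zero_le_one
      have hy0 : (0:ℝ) ≤ max (1 - ‖y - c‖) 0 := le_max_right _ _
      have hy1 : max (1 - ‖y - c‖) 0 ≤ 1 := max_le (by linarith [norm_nonneg (y - c)]) zero_le_one
      simp only [ContinuousMap.coe_mk]
      rw [abs_le]; constructor <;> linarith)

lemma bump_self (c : R2) : bump c c = 1 := by
  show max (1 - ‖c - c‖) 0 = 1
  simp
lemma bump_eq_zero {c x : R2} (h : 1 ≤ ‖x - c‖) : bump c x = 0 := by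
  show max (1 - ‖x - c‖) 0 = 0
  rw [max_eq_right]; linarith

/-! ### General measure-theoretic helpers -/

/-- A measure vanishing outside a finite set is a finite sum of point masses. -/
lemma eq_sum_dirac {α : Type*} [MeasurableSpace α] [MeasurableSingletonClass α]
    (p : Measure α) (A : Finset α) (h : p (↑A : Set α)ᶜ = 0) :
    p = ∑ q ∈ A, p {q} • Measure.dirac q := by
  classical
  ext s hs
  have h1 : p s = p (s ∩ ↑A) := by
    have h0 := measure_inter_add_diff (μ := p) s (A.measurableSet : MeasurableSet (↑A : Set α))
    have h2 : p (s \ ↑A) = 0 := measure_mono_null (Set.diff_subset_compl s ↑A) h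
    rw [← h0, h2, add_zero]
  have h3 : s ∩ ↑A = ⋃ q ∈ A.filter (· ∈ s), ({q} : Set α) := by
    ext x
    simp only [Set.mem_inter_iff, Set.mem_iUnion, Finset.mem_filter, Set.mem_singleton_iff]
    constructor
    · rintro ⟨hx, hxA⟩; exact ⟨x, ⟨hxA, hx⟩, rfl⟩
    · rintro ⟨q, ⟨hqA, hqs⟩, rfl⟩; exact ⟨hqs, hqA⟩
  rw [Measure.finset_sum_apply]
  rw [h1, h3, measure_biUnion_finset ?_ (fun q _ => measurableSet_singleton q)]
  · rw [Finset.sum_filter]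
    congr 1
    ext q
    rw [Measure.smul_apply, Measure.dirac_apply' _ hs]
    by_cases hq : q ∈ s <;> simp [hq, Set.indicator]
  · intro x hx y hy hxy
    simp only [Finset.coe_filter, Set.mem_setOf_eq] at hx hy
    exact Set.disjoint_singleton.mpr hxy

lemma integrable_dirac'' {α E : Type*} [MeasurableSpace α] [MeasurableSingletonClass α]
    [NormedAddCommGroup E] (f : α → E) (q : α) :
    Integrable f (Measure.dirac q) := by
  have h : f =ᵐ[Measure.dirac q] fun _ => f q := by
    rw [ae_dirac_eq]; exact Filter.eventually_pure.2 rfl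
  exact (integrable_const (f q)).congr h.symm

lemma integral_sum_smul_dirac {α : Type*} [MeasurableSpace α] [MeasurableSingletonClass α]
    {E : Type*} [NormedAddCommGroup E] [NormedSpace ℝ E] [CompleteSpace E]
    (A : Finset α) (c : α → ℝ≥0∞) (hc : ∀ q, c q ≠ ⊤) (f : α → E) :
    ∫ x, f x ∂(∑ q ∈ A, c q • Measure.dirac q) = ∑ q ∈ A, (c q).toReal • f q := by
  rw [integral_finset_sum_measure (fun q _ => (integrable_dirac'' f q).smul_measure (hc q))]
  refine Finset.sum_congr rfl fun q _ => ?_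
  rw [integral_smul_measure, integral_dirac]

lemma map_finset_sum' {α β : Type*} [MeasurableSpace α] [MeasurableSpace β] {ι : Type*}
    (s : Finset ι) (μ : ι → Measure α) {f : α → β} (hf : Measurable f) :
    (∑ i ∈ s, μ i).map f = ∑ i ∈ s, (μ i).map f := by
  ext t ht
  rw [Measure.map_apply hf ht, Measure.finset_sum_apply, Measure.finset_sum_apply]
  simp_rw [Measure.map_apply hf ht]

lemma eval_sum {ι : Type*} (s : Finset ι) (f : ι → R2) (k : Fin 2) :
    (∑ i ∈ s, f i) k = ∑ i ∈ s, f i k :=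
  map_sum (EuclideanSpace.proj (𝕜 := ℝ) k) f s

/-! ### Explicit descriptions of the measures -/

lemma measurable_Pker (θ : ℝ) : Measurable (Pker θ) := by
  apply Measure.measurable_of_measurable_coe
  intro s hs
  simp only [Pker, Measure.smul_apply, Measure.add_apply, Measure.dirac_apply' _ hs,
    smul_eq_mul]
  exact (((measurable_one.indicator hs).comp (measurable_add_const (dir θ))).add
    ((measurable_one.indicator hs).comp (measurable_sub_const (dir θ)))).const_mul _

lemma coupleKer_eq (θ : ℝ) (x : R2) :
    (Pker θ x).map (fun y => (x, y)) =
      (2 : ℝ≥0∞)⁻¹ • (Measure.dirac (x, x + dir θ) + Measure.dirac (x, x - dir θ)) := by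
  rw [Pker, Measure.map_smul, Measure.map_add _ _ measurable_prodMk_left,
    Measure.map_dirac' measurable_prodMk_left, Measure.map_dirac' measurable_prodMk_left]

lemma measurable_coupleKer (θ : ℝ) :
    Measurable (fun x => (Pker θ x).map (fun y => (x, y))) := by
  apply Measure.measurable_of_measurable_coe
  intro s hs
  simp only [coupleKer_eq, Measure.smul_apply, Measure.add_apply, Measure.dirac_apply' _ hs,
    smul_eq_mul]
  exact (((measurable_one.indicator hs).comp
      (measurable_id.prodMk (measurable_add_const (dir θ)))).add
    ((measurable_one.indicator hs).comp
      (measurable_id.prodMk (measurable_sub_const (dir θ))))).const_mul _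

lemma bind_muM {β : Type*} [MeasurableSpace β] (m : ℕ) (f : R2 → Measure β)
    (hf : Measurable f) :
    (muM m).bind f = (m : ℝ≥0∞)⁻¹ • ∑ i ∈ Finset.Icc 1 m, f (pt i 0) := by
  ext s hs
  rw [Measure.bind_apply hs hf.aemeasurable, muM, lintegral_smul_measure, lintegral_finset_sum_measure,
    Measure.smul_apply, Measure.finset_sum_apply]
  simp_rw [lintegral_dirac]

lemma couple_eq (θ : ℝ) (m : ℕ) :
    couple (muM m) (Pker θ) = (m : ℝ≥0∞)⁻¹ • ∑ i ∈ Finset.Icc 1 m,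
      ((2 : ℝ≥0∞)⁻¹ • (Measure.dirac (pt i 0, pt i 0 + dir θ) +
        Measure.dirac (pt i 0, pt i 0 - dir θ))) := by
  rw [couple, bind_muM _ _ (measurable_coupleKer θ)]
  simp_rw [coupleKer_eq]

lemma nu_eq (θ : ℝ) (m : ℕ) :
    (muM m).bind (Pker θ) = (m : ℝ≥0∞)⁻¹ • ∑ i ∈ Finset.Icc 1 m,
      ((2 : ℝ≥0∞)⁻¹ • (Measure.dirac (pt i 0 + dir θ) + Measure.dirac (pt i 0 - dir θ))) := by
  rw [bind_muM _ _ (measurable_Pker θ)]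
  rfl

/-! ### The index sets -/

def II (m : ℕ) : Finset ℕ := Finset.Icc 1 m
def AA (θ : ℝ) (m : ℕ) : Finset (R2 × R2) :=
  ((II m).image aPt) ×ˢ ((II m).image (tpPt θ) ∪ (II m).image (tmPt θ))

lemma sumA {θ : ℝ} (hsin : 0 < Real.sin θ) (m : ℕ) {M : Type*} [AddCommMonoid M]
    (F : R2 × R2 → M) :
    ∑ q ∈ AA θ m, F q
      = ∑ i ∈ II m, ∑ j ∈ II m, (F (aPt i, tpPt θ j) + F (aPt i, tmPt θ j)) := by
  classical
  have hdisj : Disjoint ((II m).image (tpPt θ)) ((II m).image (tmPt θ)) := by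
    rw [Finset.disjoint_left]
    rintro x hx hy
    obtain ⟨i, -, rfl⟩ := Finset.mem_image.1 hx
    obtain ⟨j, -, hj⟩ := Finset.mem_image.1 hy
    exact tpPt_ne_tmPt hsin i j hj.symm
  rw [AA, Finset.sum_product, Finset.sum_image (fun i _ j _ h => aPt_inj h)]
  refine Finset.sum_congr rfl fun i _ => ?_
  rw [Finset.sum_union hdisj, Finset.sum_image (fun a _ b _ h => tpPt_inj θ h),
    Finset.sum_image (fun a _ b _ h => tmPt_inj θ h), ← Finset.sum_add_distrib]

/-! ### Part 1: the coupling is a martingale coupling -/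

lemma part1 (θ : ℝ) (m : ℕ) (hm : 1 ≤ m) :
    IsMartCoupling (muM m) ((muM m).bind (Pker θ)) (couple (muM m) (Pker θ)) := by
  have hm0 : (m : ℝ≥0∞) ≠ 0 := Nat.cast_ne_zero.2 (by omega)
  refine ⟨⟨⟨?_⟩, ?_, ?_⟩, ?_⟩
  · rw [couple_eq]
    simp only [Measure.smul_apply, Measure.finset_sum_apply, Measure.add_apply,
      measure_univ, smul_eq_mul]
    rw [Finset.sum_const, Nat.card_Icc]
    simp only [Nat.add_sub_cancel, nsmul_eq_mul]
    have h2 : (2:ℝ≥0∞)⁻¹ * (1+1) = 1 := by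
      rw [one_add_one_eq_two]
      exact ENNReal.inv_mul_cancel two_ne_zero ENNReal.ofNat_ne_top
    rw [h2, mul_one, ENNReal.inv_mul_cancel hm0 (ENNReal.natCast_ne_top m)]
  · rw [couple_eq, Measure.map_smul, map_finset_sum' _ _ measurable_fst]
    simp_rw [Measure.map_smul, Measure.map_add _ _ measurable_fst,
      Measure.map_dirac' measurable_fst]
    rw [muM]
    congr 1
    refine Finset.sum_congr rfl fun i _ => ?_
    rw [smul_add, ← add_smul, ENNReal.inv_two_add_inv_two, one_smul]
  · rw [couple_eq, nu_eq, Measure.map_smul, map_finset_sum' _ _ measurable_snd]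
    simp_rw [Measure.map_smul, Measure.map_add _ _ measurable_snd,
      Measure.map_dirac' measurable_snd]
  · intro φ
    rw [couple_eq, integral_smul_measure, integral_finset_sum_measure (fun i _ => ?_)]
    · have : ∀ i ∈ Finset.Icc 1 m, ∫ p : R2 × R2, φ p.1 • (p.2 - p.1)
          ∂((2 : ℝ≥0∞)⁻¹ • (Measure.dirac (pt i 0, pt i 0 + dir θ) +
            Measure.dirac (pt i 0, pt i 0 - dir θ))) = 0 := by
        intro i _
        rw [integral_smul_measure, integral_add_measure (integrable_dirac'' _ _)
          (integrable_dirac'' _ _), integral_dirac, integral_dirac]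
        simp only [add_sub_cancel_left, sub_sub_cancel_left, smul_neg]
        simp
      rw [Finset.sum_congr rfl this]
      simp
    · exact ((integrable_dirac'' _ _).add_measure (integrable_dirac'' _ _)).smul_measure
        (by simp)

/-! ### Part 2: uniqueness -/

section Part2
variable {θ : ℝ} {m : ℕ} {p : Measure (R2 × R2)}

lemma part2 (hsin : 0 < Real.sin θ) (hm : 1 ≤ m)
    (hp : IsMartCoupling (muM m) ((muM m).bind (Pker θ)) p) :
    p = couple (muM m) (Pker θ) := by
  classical
  obtain ⟨⟨hprob, hfst, hsnd⟩, hmart⟩ := hp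
  haveI := hprob
  have hm0 : (m : ℝ≥0∞) ≠ 0 := Nat.cast_ne_zero.2 (by omega)
  have hmR : (0:ℝ) < m := by exact_mod_cast Nat.lt_of_lt_of_le Nat.zero_lt_one hm
  have hmuM : muM m = (m : ℝ≥0∞)⁻¹ • ∑ i ∈ II m, Measure.dirac (aPt i) := rfl
  have hnu : (muM m).bind (Pker θ) = (m : ℝ≥0∞)⁻¹ • ∑ i ∈ II m,
      ((2 : ℝ≥0∞)⁻¹ • (Measure.dirac (tpPt θ i) + Measure.dirac (tmPt θ i))) := by
    rw [nu_eq]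
    congr 1
    refine Finset.sum_congr rfl fun i _ => ?_
    rw [show pt (i:ℕ) 0 + dir θ = tpPt θ i from aPt_add_dir θ i,
      show pt (i:ℕ) 0 - dir θ = tmPt θ i from aPt_sub_dir θ i]
  have hSmeas : MeasurableSet (↑((II m).image aPt) : Set R2) :=
    Finset.finite_toSet _ |>.measurableSet
  have hTmeas : MeasurableSet (↑((II m).image (tpPt θ) ∪ (II m).image (tmPt θ)) : Set R2) :=
    Finset.finite_toSet _ |>.measurableSet
  -- p vanishes outside AA
  have hfst0 : p (Prod.fst ⁻¹' (↑((II m).image aPt) : Set R2)ᶜ) = 0 := by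
    rw [← Measure.map_apply measurable_fst hSmeas.compl, hfst, hmuM, Measure.smul_apply,
      Measure.finset_sum_apply, smul_eq_mul]
    rw [Finset.sum_eq_zero, mul_zero]
    intro i hi
    rw [Measure.dirac_apply]
    refine Set.indicator_of_notMem ?_ _
    simp only [Set.mem_compl_iff, not_not, Finset.mem_coe]
    exact Finset.mem_image_of_mem aPt hi
  have hsnd0 : p (Prod.snd ⁻¹' (↑((II m).image (tpPt θ) ∪ (II m).image (tmPt θ)) : Set R2)ᶜ)
      = 0 := by
    rw [← Measure.map_apply measurable_snd hTmeas.compl, hsnd, hnu, Measure.smul_apply,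
      Measure.finset_sum_apply, smul_eq_mul]
    rw [Finset.sum_eq_zero, mul_zero]
    intro i hi
    rw [Measure.smul_apply, Measure.add_apply, Measure.dirac_apply, Measure.dirac_apply]
    rw [Set.indicator_of_notMem (by
      simp only [Set.mem_compl_iff, not_not, Finset.mem_coe]
      exact Finset.mem_union_left _ (Finset.mem_image_of_mem _ hi)) _]
    rw [Set.indicator_of_notMem (by
      simp only [Set.mem_compl_iff, not_not, Finset.mem_coe]
      exact Finset.mem_union_right _ (Finset.mem_image_of_mem _ hi)) _]
    simp
  have hA0 : p (↑(AA θ m) : Set (R2 × R2))ᶜ = 0 := by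
    refine measure_mono_null ?_ (measure_union_null hfst0 hsnd0)
    intro q hq
    simp only [Set.mem_compl_iff, Finset.mem_coe, AA, Finset.mem_product, not_and_or] at hq
    rcases hq with h | h
    · exact Set.mem_union_left _ (by simpa using h)
    · exact Set.mem_union_right _ (by simpa using h)
  have hrep := eq_sum_dirac p (AA θ m) hA0
  have hwni : ∀ q : R2 × R2, p {q} ≠ ⊤ := fun q => measure_ne_top p _
  -- generic evaluation of p on measurable sets
  have happ : ∀ B : Set (R2 × R2), MeasurableSet B →
      p B = ∑ i ∈ II m, ∑ j ∈ II m,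
        (p {(aPt i, tpPt θ j)} * B.indicator 1 (aPt i, tpPt θ j)
          + p {(aPt i, tmPt θ j)} * B.indicator 1 (aPt i, tmPt θ j)) := by
    intro B hB
    conv_lhs => rw [hrep]
    rw [Measure.finset_sum_apply]
    have e1 : ∀ q ∈ AA θ m, (p {q} • Measure.dirac q) B = p {q} * B.indicator 1 q :=
      fun q _ => by rw [Measure.smul_apply, smul_eq_mul, Measure.dirac_apply' _ hB]
    rw [Finset.sum_congr rfl e1, sumA hsin m (fun q => p {q} * B.indicator 1 q)]
  -- row sums
  have hrow : ∀ i ∈ II m, ∑ j ∈ II m, (p {(aPt i, tpPt θ j)} + p {(aPt i, tmPt θ j)})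
      = (m : ℝ≥0∞)⁻¹ := by
    intro i hi
    have h1 : p (Prod.fst ⁻¹' ({aPt i} : Set R2)) = (m : ℝ≥0∞)⁻¹ := by
      rw [← Measure.map_apply measurable_fst (measurableSet_singleton _), hfst, hmuM,
        Measure.smul_apply, Measure.finset_sum_apply, smul_eq_mul]
      have e0 : ∀ k ∈ II m, k ≠ i → Measure.dirac (aPt k) ({aPt i} : Set R2) = 0 := by
        intro k _ hki
        rw [Measure.dirac_apply]
        exact Set.indicator_of_notMem
          (by simp only [Set.mem_singleton_iff]; exact fun h => hki (aPt_inj h)) _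
      rw [Finset.sum_eq_single_of_mem i hi e0, Measure.dirac_apply,
        Set.indicator_of_mem (show aPt i ∈ ({aPt i} : Set R2) from rfl), Pi.one_apply, mul_one]
    have h2 := happ _ (measurable_fst (measurableSet_singleton (aPt i)))
    have e0 : ∀ k ∈ II m, k ≠ i →
        (∑ j ∈ II m, (p {(aPt k, tpPt θ j)}
            * (Prod.fst ⁻¹' ({aPt i} : Set R2)).indicator 1 (aPt k, tpPt θ j)
          + p {(aPt k, tmPt θ j)}
            * (Prod.fst ⁻¹' ({aPt i} : Set R2)).indicator 1 (aPt k, tmPt θ j))) = 0 := by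
      intro k _ hki
      refine Finset.sum_eq_zero fun j _ => ?_
      rw [Set.indicator_of_notMem (by
            simp only [Set.mem_preimage, Set.mem_singleton_iff]
            exact fun h => hki (aPt_inj h)) _,
        Set.indicator_of_notMem (by
            simp only [Set.mem_preimage, Set.mem_singleton_iff]
            exact fun h => hki (aPt_inj h)) _,
        mul_zero, mul_zero, add_zero]
    rw [Finset.sum_eq_single_of_mem i hi e0] at h2
    have e1 : ∀ j ∈ II m,
        (p {(aPt i, tpPt θ j)}
            * (Prod.fst ⁻¹' ({aPt i} : Set R2)).indicator 1 (aPt i, tpPt θ j)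
          + p {(aPt i, tmPt θ j)}
            * (Prod.fst ⁻¹' ({aPt i} : Set R2)).indicator 1 (aPt i, tmPt θ j))
        = p {(aPt i, tpPt θ j)} + p {(aPt i, tmPt θ j)} := by
      intro j _
      rw [Set.indicator_of_mem
          (show (aPt i, tpPt θ j) ∈ Prod.fst ⁻¹' ({aPt i} : Set R2) from rfl),
        Set.indicator_of_mem
          (show (aPt i, tmPt θ j) ∈ Prod.fst ⁻¹' ({aPt i} : Set R2) from rfl)]
      simp only [Pi.one_apply, mul_one]
    rw [Finset.sum_congr rfl e1] at h2
    rw [← h2, h1]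
  -- column sums
  have hcol : ∀ j ∈ II m, ∑ i ∈ II m, (p {(aPt i, tpPt θ j)} + p {(aPt i, tmPt θ j)})
      = (m : ℝ≥0∞)⁻¹ := by
    intro j hj
    have hBmeas : MeasurableSet ({tpPt θ j, tmPt θ j} : Set R2) :=
      (measurableSet_singleton (tmPt θ j)).insert _
    have htpB : ∀ k, tpPt θ k ∈ ({tpPt θ j, tmPt θ j} : Set R2) ↔ k = j := by
      intro k
      simp only [Set.mem_insert_iff, Set.mem_singleton_iff]
      constructor
      · rintro (h | h)
        · exact tpPt_inj θ h
        · exact absurd h (tpPt_ne_tmPt hsin k j)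
      · rintro rfl; exact Or.inl rfl
    have htmB : ∀ k, tmPt θ k ∈ ({tpPt θ j, tmPt θ j} : Set R2) ↔ k = j := by
      intro k
      simp only [Set.mem_insert_iff, Set.mem_singleton_iff]
      constructor
      · rintro (h | h)
        · exact absurd h.symm (tpPt_ne_tmPt hsin j k)
        · exact tmPt_inj θ h
      · rintro rfl; exact Or.inr rfl
    have h1 : p (Prod.snd ⁻¹' ({tpPt θ j, tmPt θ j} : Set R2)) = (m : ℝ≥0∞)⁻¹ := by
      rw [← Measure.map_apply measurable_snd hBmeas, hsnd, hnu, Measure.smul_apply,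
        Measure.finset_sum_apply, smul_eq_mul]
      have e0 : ∀ k ∈ II m, k ≠ j →
          ((2 : ℝ≥0∞)⁻¹ • (Measure.dirac (tpPt θ k) + Measure.dirac (tmPt θ k)))
            ({tpPt θ j, tmPt θ j} : Set R2) = 0 := by
        intro k _ hkj
        rw [Measure.smul_apply, Measure.add_apply, Measure.dirac_apply, Measure.dirac_apply,
          Set.indicator_of_notMem (fun h => hkj ((htpB k).1 h)) _,
          Set.indicator_of_notMem (fun h => hkj ((htmB k).1 h)) _]
        simp
      rw [Finset.sum_eq_single_of_mem j hj e0, Measure.smul_apply, Measure.add_apply,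
        Measure.dirac_apply, Measure.dirac_apply,
        Set.indicator_of_mem ((htpB j).2 rfl), Set.indicator_of_mem ((htmB j).2 rfl)]
      have h2 : (2:ℝ≥0∞)⁻¹ • ((1 : R2 → ℝ≥0∞) (tpPt θ j) + (1 : R2 → ℝ≥0∞) (tmPt θ j))
          = 1 := by
        simp only [Pi.one_apply]
        rw [one_add_one_eq_two, smul_eq_mul]
        exact ENNReal.inv_mul_cancel two_ne_zero ENNReal.ofNat_ne_top
      rw [h2, mul_one]
    have h2 := happ _ (measurable_snd hBmeas)
    have e1 : ∀ i ∈ II m,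
        (∑ k ∈ II m, (p {(aPt i, tpPt θ k)}
            * (Prod.snd ⁻¹' ({tpPt θ j, tmPt θ j} : Set R2)).indicator 1 (aPt i, tpPt θ k)
          + p {(aPt i, tmPt θ k)}
            * (Prod.snd ⁻¹' ({tpPt θ j, tmPt θ j} : Set R2)).indicator 1 (aPt i, tmPt θ k)))
        = p {(aPt i, tpPt θ j)} + p {(aPt i, tmPt θ j)} := by
      intro i _
      have e0 : ∀ k ∈ II m, k ≠ j →
          (p {(aPt i, tpPt θ k)}
            * (Prod.snd ⁻¹' ({tpPt θ j, tmPt θ j} : Set R2)).indicator 1 (aPt i, tpPt θ k)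
          + p {(aPt i, tmPt θ k)}
            * (Prod.snd ⁻¹' ({tpPt θ j, tmPt θ j} : Set R2)).indicator 1 (aPt i, tmPt θ k))
          = 0 := by
        intro k _ hkj
        rw [Set.indicator_of_notMem (show (aPt i, tpPt θ k) ∉
            Prod.snd ⁻¹' ({tpPt θ j, tmPt θ j} : Set R2) from fun h => hkj ((htpB k).1 h)) _,
          Set.indicator_of_notMem (show (aPt i, tmPt θ k) ∉
            Prod.snd ⁻¹' ({tpPt θ j, tmPt θ j} : Set R2) from fun h => hkj ((htmB k).1 h)) _,
          mul_zero, mul_zero, add_zero]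
      rw [Finset.sum_eq_single_of_mem j hj e0,
        Set.indicator_of_mem (show (aPt i, tpPt θ j) ∈
          Prod.snd ⁻¹' ({tpPt θ j, tmPt θ j} : Set R2) from (htpB j).2 rfl),
        Set.indicator_of_mem (show (aPt i, tmPt θ j) ∈
          Prod.snd ⁻¹' ({tpPt θ j, tmPt θ j} : Set R2) from (htmB j).2 rfl)]
      simp only [Pi.one_apply, mul_one]
    rw [Finset.sum_congr rfl e1] at h2
    rw [← h2, h1]
  -- martingale equations, localized at each atom of muM
  have hmart2 : ∀ i ∈ II m,
      ∑ j ∈ II m, ((p {(aPt i, tpPt θ j)}).toReal • (tpPt θ j - aPt i)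
        + (p {(aPt i, tmPt θ j)}).toReal • (tmPt θ j - aPt i)) = (0 : R2) := by
    intro i hi
    have h0 := (integral_sum_smul_dirac (AA θ m) (fun q => p {q}) hwni
      (fun q : R2 × R2 => bump (aPt i) q.1 • (q.2 - q.1))).symm
    rw [← hrep] at h0
    rw [hmart (bump (aPt i))] at h0
    rw [sumA hsin m (fun q : R2 × R2 =>
      (p {q}).toReal • (bump (aPt i) q.1 • (q.2 - q.1)))] at h0
    have e0 : ∀ k ∈ II m, k ≠ i →
        (∑ j ∈ II m, ((p {(aPt k, tpPt θ j)}).toReal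
            • (bump (aPt i) (aPt k) • (tpPt θ j - aPt k))
          + (p {(aPt k, tmPt θ j)}).toReal
            • (bump (aPt i) (aPt k) • (tmPt θ j - aPt k)))) = 0 := by
      intro k _ hki
      refine Finset.sum_eq_zero fun j _ => ?_
      simp [bump_eq_zero (one_le_norm_aPt_sub hki)]
    rw [Finset.sum_eq_single_of_mem i hi e0] at h0
    have e1 : ∀ j ∈ II m,
        ((p {(aPt i, tpPt θ j)}).toReal • (bump (aPt i) (aPt i) • (tpPt θ j - aPt i))
          + (p {(aPt i, tmPt θ j)}).toReal • (bump (aPt i) (aPt i) • (tmPt θ j - aPt i)))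
        = ((p {(aPt i, tpPt θ j)}).toReal • (tpPt θ j - aPt i)
          + (p {(aPt i, tmPt θ j)}).toReal • (tmPt θ j - aPt i)) := by
      intro j _
      rw [bump_self, one_smul, one_smul]
    rw [Finset.sum_congr rfl e1] at h0
    exact h0
  -- vertical component
  have hv1 : ∀ i ∈ II m, ∑ j ∈ II m, ((p {(aPt i, tpPt θ j)}).toReal * Real.sin θ
      + (p {(aPt i, tmPt θ j)}).toReal * (-Real.sin θ)) = 0 := by
    intro i hi
    have h0 : (∑ j ∈ II m, ((p {(aPt i, tpPt θ j)}).toReal • (tpPt θ j - aPt i)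
        + (p {(aPt i, tmPt θ j)}).toReal • (tmPt θ j - aPt i))) (1 : Fin 2) = 0 := by
      rw [hmart2 i hi]; rfl
    rw [eval_sum] at h0
    rw [← h0]
    refine Finset.sum_congr rfl fun j _ => ?_
    show (p {(aPt i, tpPt θ j)}).toReal * Real.sin θ
        + (p {(aPt i, tmPt θ j)}).toReal * (-Real.sin θ)
      = (p {(aPt i, tpPt θ j)}).toReal * (Real.sin θ - 0)
        + (p {(aPt i, tmPt θ j)}).toReal * (-Real.sin θ - 0)
    ring
  -- horizontal component
  have hv0 : ∀ i ∈ II m, ∑ j ∈ II m,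
      ((p {(aPt i, tpPt θ j)}).toReal * (((j:ℝ) + Real.cos θ) - (i:ℝ))
        + (p {(aPt i, tmPt θ j)}).toReal * (((j:ℝ) - Real.cos θ) - (i:ℝ))) = 0 := by
    intro i hi
    have h0 : (∑ j ∈ II m, ((p {(aPt i, tpPt θ j)}).toReal • (tpPt θ j - aPt i)
        + (p {(aPt i, tmPt θ j)}).toReal • (tmPt θ j - aPt i))) (0 : Fin 2) = 0 := by
      rw [hmart2 i hi]; rfl
    rw [eval_sum] at h0
    rw [← h0]
    exact Finset.sum_congr rfl fun j _ => rfl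
  -- real-valued marginal sums
  have hrow_real : ∀ i ∈ II m, ∑ j ∈ II m, ((p {(aPt i, tpPt θ j)}).toReal
      + (p {(aPt i, tmPt θ j)}).toReal) = (m:ℝ)⁻¹ := by
    intro i hi
    have h0 := congrArg ENNReal.toReal (hrow i hi)
    rw [ENNReal.toReal_sum (fun j _ => ENNReal.add_ne_top.2 ⟨hwni _, hwni _⟩)] at h0
    rw [Finset.sum_congr rfl (fun j _ => ENNReal.toReal_add (hwni _) (hwni _))] at h0
    simpa using h0
  have hcol_real : ∀ j ∈ II m, ∑ i ∈ II m, ((p {(aPt i, tpPt θ j)}).toReal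
      + (p {(aPt i, tmPt θ j)}).toReal) = (m:ℝ)⁻¹ := by
    intro j hj
    have h0 := congrArg ENNReal.toReal (hcol j hj)
    rw [ENNReal.toReal_sum (fun i _ => ENNReal.add_ne_top.2 ⟨hwni _, hwni _⟩)] at h0
    rw [Finset.sum_congr rfl (fun i _ => ENNReal.toReal_add (hwni _) (hwni _))] at h0
    simpa using h0
  -- equal up/down mass
  have hvert : ∀ i ∈ II m, ∑ j ∈ II m, (p {(aPt i, tpPt θ j)}).toReal
      = ∑ j ∈ II m, (p {(aPt i, tmPt θ j)}).toReal := by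
    intro i hi
    have h1 : (∑ j ∈ II m, (p {(aPt i, tpPt θ j)}).toReal
        - ∑ j ∈ II m, (p {(aPt i, tmPt θ j)}).toReal) * Real.sin θ = 0 := by
      rw [sub_mul, Finset.sum_mul, Finset.sum_mul, ← Finset.sum_sub_distrib, ← hv1 i hi]
      exact Finset.sum_congr rfl fun j _ => by ring
    rcases mul_eq_zero.1 h1 with h | h
    · exact sub_eq_zero.1 h
    · exact absurd h (ne_of_gt hsin)
  -- martingale (mean) condition
  have hhoriz : ∀ i ∈ II m, ∑ j ∈ II m, (((p {(aPt i, tpPt θ j)}).toReal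
      + (p {(aPt i, tmPt θ j)}).toReal) * ((j:ℝ) - (i:ℝ))) = 0 := by
    intro i hi
    have h1 : ∑ j ∈ II m, (((p {(aPt i, tpPt θ j)}).toReal
          + (p {(aPt i, tmPt θ j)}).toReal) * ((j:ℝ) - (i:ℝ)))
        = ∑ j ∈ II m, ((p {(aPt i, tpPt θ j)}).toReal * (((j:ℝ) + Real.cos θ) - (i:ℝ))
            + (p {(aPt i, tmPt θ j)}).toReal * (((j:ℝ) - Real.cos θ) - (i:ℝ)))
          - (∑ j ∈ II m, (p {(aPt i, tpPt θ j)}).toReal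
            - ∑ j ∈ II m, (p {(aPt i, tmPt θ j)}).toReal) * Real.cos θ := by
      rw [sub_mul, Finset.sum_mul, Finset.sum_mul, ← Finset.sum_sub_distrib,
        ← Finset.sum_sub_distrib]
      exact Finset.sum_congr rfl fun j _ => by ring
    rw [h1, hv0 i hi, hvert i hi, sub_self, zero_mul, sub_zero]
  have hmean : ∀ i ∈ II m, ∑ j ∈ II m, ((j:ℝ) * (p {(aPt i, tpPt θ j)}).toReal
      + (j:ℝ) * (p {(aPt i, tmPt θ j)}).toReal) = (i:ℝ) * (m:ℝ)⁻¹ := by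
    intro i hi
    have h0 := hhoriz i hi
    have h1 : ∑ j ∈ II m, (((p {(aPt i, tpPt θ j)}).toReal
          + (p {(aPt i, tmPt θ j)}).toReal) * ((j:ℝ) - (i:ℝ)))
        = ∑ j ∈ II m, ((j:ℝ) * (p {(aPt i, tpPt θ j)}).toReal
            + (j:ℝ) * (p {(aPt i, tmPt θ j)}).toReal)
          - (i:ℝ) * ∑ j ∈ II m, ((p {(aPt i, tpPt θ j)}).toReal
            + (p {(aPt i, tmPt θ j)}).toReal) := by
      rw [Finset.mul_sum, ← Finset.sum_sub_distrib]
      exact Finset.sum_congr rfl fun j _ => by ring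
    rw [h1, hrow_real i hi] at h0
    linarith
  -- the second moment argument
  have hkey : ∑ i ∈ II m, ∑ j ∈ II m, (((j:ℝ) - (i:ℝ))^2 * (p {(aPt i, tpPt θ j)}).toReal
      + ((j:ℝ) - (i:ℝ))^2 * (p {(aPt i, tmPt θ j)}).toReal) = 0 := by
    have h1 : ∀ i ∈ II m, ∑ j ∈ II m, (((j:ℝ) - (i:ℝ))^2 * (p {(aPt i, tpPt θ j)}).toReal
        + ((j:ℝ) - (i:ℝ))^2 * (p {(aPt i, tmPt θ j)}).toReal)
        = ∑ j ∈ II m, ((j:ℝ)^2 * ((p {(aPt i, tpPt θ j)}).toReal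
            + (p {(aPt i, tmPt θ j)}).toReal))
          - 2*(i:ℝ)*((i:ℝ) * (m:ℝ)⁻¹) + (i:ℝ)^2*(m:ℝ)⁻¹ := by
      intro i hi
      have e : ∑ j ∈ II m, (((j:ℝ) - (i:ℝ))^2 * (p {(aPt i, tpPt θ j)}).toReal
          + ((j:ℝ) - (i:ℝ))^2 * (p {(aPt i, tmPt θ j)}).toReal)
          = ∑ j ∈ II m, ((j:ℝ)^2 * ((p {(aPt i, tpPt θ j)}).toReal
              + (p {(aPt i, tmPt θ j)}).toReal))
            - 2*(i:ℝ)*(∑ j ∈ II m, ((j:ℝ) * (p {(aPt i, tpPt θ j)}).toReal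
              + (j:ℝ) * (p {(aPt i, tmPt θ j)}).toReal))
            + (i:ℝ)^2*(∑ j ∈ II m, ((p {(aPt i, tpPt θ j)}).toReal
              + (p {(aPt i, tmPt θ j)}).toReal)) := by
        rw [Finset.mul_sum, Finset.mul_sum, ← Finset.sum_sub_distrib,
          ← Finset.sum_add_distrib]
        exact Finset.sum_congr rfl fun j _ => by ring
      rw [e, hmean i hi, hrow_real i hi]
    rw [Finset.sum_congr rfl h1]
    rw [Finset.sum_add_distrib, Finset.sum_sub_distrib]
    have h2 : ∑ i ∈ II m, ∑ j ∈ II m, ((j:ℝ)^2 * ((p {(aPt i, tpPt θ j)}).toReal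
        + (p {(aPt i, tmPt θ j)}).toReal)) = ∑ j ∈ II m, (j:ℝ)^2 * (m:ℝ)⁻¹ := by
      rw [Finset.sum_comm]
      refine Finset.sum_congr rfl fun j hj => ?_
      rw [← Finset.mul_sum, hcol_real j hj]
    rw [h2]
    have h3 : ∀ i ∈ II m, 2*(i:ℝ)*((i:ℝ)*(m:ℝ)⁻¹) = 2*((i:ℝ)^2*(m:ℝ)⁻¹) :=
      fun i _ => by ring
    rw [Finset.sum_congr rfl h3, ← Finset.mul_sum]
    ring
  -- all off-diagonal masses vanish
  have hnn : ∀ i j : ℕ, (0:ℝ) ≤ ((j:ℝ) - (i:ℝ))^2 * (p {(aPt i, tpPt θ j)}).toReal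
      + ((j:ℝ) - (i:ℝ))^2 * (p {(aPt i, tmPt θ j)}).toReal :=
    fun i j => add_nonneg (mul_nonneg (sq_nonneg _) ENNReal.toReal_nonneg)
      (mul_nonneg (sq_nonneg _) ENNReal.toReal_nonneg)
  have hzero : ∀ i ∈ II m, ∀ j ∈ II m, i ≠ j →
      p {(aPt i, tpPt θ j)} = 0 ∧ p {(aPt i, tmPt θ j)} = 0 := by
    intro i hi j hj hij
    have h1 := (Finset.sum_eq_zero_iff_of_nonneg
      (fun i _ => Finset.sum_nonneg (fun j _ => hnn i j))).1 hkey i hi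
    have h2 := (Finset.sum_eq_zero_iff_of_nonneg (fun j _ => hnn i j)).1 h1 j hj
    have h3 : ((j:ℝ) - (i:ℝ)) ≠ 0 := by
      have : (j:ℝ) ≠ (i:ℝ) := by exact_mod_cast Ne.symm hij
      exact sub_ne_zero.2 this
    have h4 : (0:ℝ) < ((j:ℝ) - (i:ℝ))^2 := by positivity
    have ha : (p {(aPt i, tpPt θ j)}).toReal = 0 := by
      nlinarith [ENNReal.toReal_nonneg (a := p {(aPt i, tpPt θ j)}),
        ENNReal.toReal_nonneg (a := p {(aPt i, tmPt θ j)})]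
    have hb : (p {(aPt i, tmPt θ j)}).toReal = 0 := by
      nlinarith [ENNReal.toReal_nonneg (a := p {(aPt i, tpPt θ j)}),
        ENNReal.toReal_nonneg (a := p {(aPt i, tmPt θ j)})]
    constructor
    · rcases (ENNReal.toReal_eq_zero_iff _).1 ha with h | h
      · exact h
      · exact absurd h (hwni _)
    · rcases (ENNReal.toReal_eq_zero_iff _).1 hb with h | h
      · exact h
      · exact absurd h (hwni _)
  -- diagonal masses
  have hfintop : ((m:ℝ≥0∞)⁻¹ * 2⁻¹) ≠ ⊤ :=
    ENNReal.mul_ne_top (ENNReal.inv_ne_top.2 hm0) (by simp)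
  have hdiag : ∀ i ∈ II m, p {(aPt i, tpPt θ i)} = (m:ℝ≥0∞)⁻¹ * 2⁻¹
      ∧ p {(aPt i, tmPt θ i)} = (m:ℝ≥0∞)⁻¹ * 2⁻¹ := by
    intro i hi
    have hsii : (p {(aPt i, tpPt θ i)}).toReal + (p {(aPt i, tmPt θ i)}).toReal
        = (m:ℝ)⁻¹ := by
      have h0 := hrow_real i hi
      have e0 : ∀ j ∈ II m, j ≠ i → (p {(aPt i, tpPt θ j)}).toReal
          + (p {(aPt i, tmPt θ j)}).toReal = 0 := by
        intro j hj hji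
        rcases hzero i hi j hj (Ne.symm hji) with ⟨h1, h2⟩
        rw [h1, h2]
        simp
      rw [Finset.sum_eq_single_of_mem i hi e0] at h0
      exact h0
    have heq : (p {(aPt i, tpPt θ i)}).toReal = (p {(aPt i, tmPt θ i)}).toReal := by
      have h0 := hvert i hi
      have e1 : ∑ j ∈ II m, (p {(aPt i, tpPt θ j)}).toReal
          = (p {(aPt i, tpPt θ i)}).toReal :=
        Finset.sum_eq_single_of_mem i hi (fun j hj hji => by
          rcases hzero i hi j hj (Ne.symm hji) with ⟨h1, -⟩
          rw [h1]; simp)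
      have e2 : ∑ j ∈ II m, (p {(aPt i, tmPt θ j)}).toReal
          = (p {(aPt i, tmPt θ i)}).toReal :=
        Finset.sum_eq_single_of_mem i hi (fun j hj hji => by
          rcases hzero i hi j hj (Ne.symm hji) with ⟨-, h2⟩
          rw [h2]; simp)
      rw [e1, e2] at h0
      exact h0
    have hval : ((m:ℝ≥0∞)⁻¹ * 2⁻¹).toReal = (m:ℝ)⁻¹ * 2⁻¹ := by
      rw [ENNReal.toReal_mul]
      simp
    constructor
    · refine (ENNReal.toReal_eq_toReal_iff' (hwni _) hfintop).1 ?_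
      rw [hval]; linarith
    · refine (ENNReal.toReal_eq_toReal_iff' (hwni _) hfintop).1 ?_
      rw [hval]; linarith
  -- assemble
  have hcouple : couple (muM m) (Pker θ) = ∑ i ∈ II m,
      (((m:ℝ≥0∞)⁻¹ * 2⁻¹) • Measure.dirac (aPt i, tpPt θ i)
        + ((m:ℝ≥0∞)⁻¹ * 2⁻¹) • Measure.dirac (aPt i, tmPt θ i)) := by
    rw [couple_eq, Finset.smul_sum]
    refine Finset.sum_congr rfl fun i _ => ?_
    rw [show pt (i:ℕ) 0 + dir θ = tpPt θ i from aPt_add_dir θ i,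
      show pt (i:ℕ) 0 - dir θ = tmPt θ i from aPt_sub_dir θ i, smul_add, smul_add, smul_smul, smul_smul]
    rfl
  rw [hrep, sumA hsin m (fun q => p {q} • Measure.dirac q), hcouple]
  refine Finset.sum_congr rfl fun i hi => ?_
  have e1 : ∀ j ∈ II m, j ≠ i →
      (p {(aPt i, tpPt θ j)} • Measure.dirac (aPt i, tpPt θ j)
        + p {(aPt i, tmPt θ j)} • Measure.dirac (aPt i, tmPt θ j)) = 0 := by
    intro j hj hji
    rcases hzero i hi j hj (Ne.symm hji) with ⟨h1, h2⟩
    rw [h1, h2, zero_smul, zero_smul, add_zero]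
  rw [Finset.sum_eq_single_of_mem i hi e1, (hdiag i hi).1, (hdiag i hi).2]

end Part2


/-- `μ_m(Id, P_{π/(2n)})` is the unique martingale coupling between
`μ_m` and `ν_{m,n} = μ_m P_{π/(2n)}`. -/
theorem stmt4 (m n : ℕ) (hm : 1 ≤ m) (hn : 1 ≤ n) :
    IsMartCoupling (muM m) ((muM m).bind (Pker (Real.pi / (2 * n))))
      (couple (muM m) (Pker (Real.pi / (2 * n))))
    ∧ ∀ p : Measure (R2 × R2),
        IsMartCoupling (muM m) ((muM m).bind (Pker (Real.pi / (2 * n)))) p →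
        p = couple (muM m) (Pker (Real.pi / (2 * n))) := by
  have hn0 : (0:ℝ) < 2 * n := by
    have : (1:ℝ) ≤ n := by exact_mod_cast hn
    linarith
  have h1n : (1:ℝ) < 2 * n := by
    have : (1:ℝ) ≤ n := by exact_mod_cast hn
    linarith
  have hsin : 0 < Real.sin (Real.pi / (2 * n)) :=
    Real.sin_pos_of_pos_of_lt_pi (div_pos Real.pi_pos hn0)
      (div_lt_self Real.pi_pos h1n)
  exact ⟨part1 _ m hm, fun p hp => part2 hsin hm hp⟩
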